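/- Let (ε_i)_{i≥1} be i.i.d. centered random variables bounded by A, with positive variance, S_m their partial sums, V⁻_0 = inf{m ≥ 1 : S_m ≤ 0}, and for x ≥ 0 let Q_x denote the law of the walk started at x. For k ≥ 1 and levels 0 < (i-1)a, define H_{ia,k} as the k-th time the walk lies in [(i-1)a, ia). Then Q_x[H_{ia,k} < V⁻_0] ≤ (1 - Q[ε_0 < -A/2] · Q_{(i-1)a - A/4}[V⁺_{(i-1)a} ≥ V⁻_0])^{k-1}, where V⁺_y = inf{m ≥ 1 : S_m ≥ y}. -/

import Mathlib

open MeasureTheory ProbabilityTheory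
open scoped ENNReal Classical

/-- Partial sums `S m = ε 1 + ⋯ + ε m` of the increments `ε`. -/
noncomputable def rwS {Ω : Type*} (ε : ℕ → Ω → ℝ) (m : ℕ) (ω : Ω) : ℝ :=
  ∑ i ∈ Finset.Icc 1 m, ε i ω

/-- `V⁻_a`: first time `m ≥ 1` at which `f m ≤ -a` (with value `⊤` if there is none).
Here `f` is the trajectory of the walk. -/
noncomputable def firstLE (a : ℝ) (f : ℕ → ℝ) : ℕ∞ :=
  sInf {t : ℕ∞ | ∃ m : ℕ, 1 ≤ m ∧ f m ≤ -a ∧ t = (m : ℕ∞)}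

/-- `V⁺_d`: first time `m ≥ 1` at which `f m ≥ d` (with value `⊤` if there is none). -/
noncomputable def firstGE (d : ℝ) (f : ℕ → ℝ) : ℕ∞ :=
  sInf {t : ℕ∞ | ∃ m : ℕ, 1 ≤ m ∧ d ≤ f m ∧ t = (m : ℕ∞)}

/-- `bandTime lo hi f k` is the `k`-th time the trajectory `f` lies in the band `[lo, hi)`
(`bandTime lo hi f 0 = 0`, value `⊤` if there is no such time). -/
noncomputable def bandTime (lo hi : ℝ) (f : ℕ → ℝ) : ℕ → ℕ∞
  | 0 => 0
  | k + 1 => sInf {t : ℕ∞ | ∃ m : ℕ,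
      bandTime lo hi f k < (m : ℕ∞) ∧ f m ∈ Set.Ico lo hi ∧ t = (m : ℕ∞)}


set_option linter.unusedSectionVars false
set_option maxHeartbeats 1000000

section Hit

variable {Pr : ℕ → Prop}

lemma hit_le_iff (Pr : ℕ → Prop) (n : ℕ) :
    sInf {t : ℕ∞ | ∃ m : ℕ, Pr m ∧ t = (m : ℕ∞)} ≤ (n : ℕ∞) ↔ ∃ m ≤ n, Pr m := by
  constructor
  · intro h
    by_contra hc
    push_neg at hc
    have hlb : ∀ t ∈ {t : ℕ∞ | ∃ m : ℕ, Pr m ∧ t = (m : ℕ∞)}, ((n + 1 : ℕ) : ℕ∞) ≤ t := by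
      rintro t ⟨m, hm, rfl⟩
      have : n < m := lt_of_not_ge fun hle => hc m hle hm
      exact_mod_cast this
    have h2 : ((n + 1 : ℕ) : ℕ∞) ≤ (n : ℕ∞) := (le_sInf hlb).trans h
    have : n + 1 ≤ n := by exact_mod_cast h2
    omega
  · rintro ⟨m, hmn, hPm⟩
    exact le_trans (sInf_le ⟨m, hPm, rfl⟩) (by exact_mod_cast hmn)

lemma hit_lt_iff (Pr : ℕ → Prop) (n : ℕ) :
    sInf {t : ℕ∞ | ∃ m : ℕ, Pr m ∧ t = (m : ℕ∞)} < (n : ℕ∞) ↔ ∃ m < n, Pr m := by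
  cases n with
  | zero =>
    constructor
    · intro h; exact absurd h (by simp)
    · rintro ⟨m, hm, _⟩; omega
  | succ n =>
    have h1 : sInf {t : ℕ∞ | ∃ m : ℕ, Pr m ∧ t = (m : ℕ∞)} < ((n + 1 : ℕ) : ℕ∞) ↔
        sInf {t : ℕ∞ | ∃ m : ℕ, Pr m ∧ t = (m : ℕ∞)} ≤ (n : ℕ∞) := by
      rw [Nat.cast_add, Nat.cast_one, ENat.lt_add_one_iff (by simp)]
    rw [h1, hit_le_iff]
    constructor
    · rintro ⟨m, h1, h2⟩; exact ⟨m, by omega, h2⟩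
    · rintro ⟨m, h1, h2⟩; exact ⟨m, by omega, h2⟩

lemma hit_eq_iff (Pr : ℕ → Prop) (n : ℕ) :
    sInf {t : ℕ∞ | ∃ m : ℕ, Pr m ∧ t = (m : ℕ∞)} = (n : ℕ∞) ↔ Pr n ∧ ∀ m < n, ¬ Pr m := by
  constructor
  · intro h
    have hnot : ∀ m < n, ¬ Pr m := by
      intro m hm hPm
      have : sInf {t : ℕ∞ | ∃ m : ℕ, Pr m ∧ t = (m : ℕ∞)} < (n : ℕ∞) :=
        (hit_lt_iff Pr n).2 ⟨m, hm, hPm⟩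
      exact absurd h (ne_of_lt this)
    obtain ⟨m, hmn, hPm⟩ := (hit_le_iff Pr n).1 h.le
    have : m = n := by
      by_contra hne
      exact hnot m (lt_of_le_of_ne hmn hne) hPm
    exact ⟨this ▸ hPm, hnot⟩
  · rintro ⟨hn, hmin⟩
    refine le_antisymm ((hit_le_iff Pr n).2 ⟨n, le_refl n, hn⟩) ?_
    by_contra hc
    push_neg at hc
    obtain ⟨m, hm, hPm⟩ := (hit_lt_iff Pr n).1 hc
    exact hmin m hm hPm

lemma hit_ne_top_exists {S : Set ℕ∞} (h : sInf S ≠ ⊤) : ∃ n : ℕ, sInf S = (n : ℕ∞) := by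
  lift sInf S to ℕ using h with n hn
  exact ⟨n, rfl⟩

end Hit

section Shift

variable {Ω : Type*} [MeasurableSpace Ω] (P : Measure Ω) [IsProbabilityMeasure P]
  (ε : ℕ → Ω → ℝ)

lemma map_shift_tuple_eq_pi (hmeas : ∀ i, Measurable (ε i))
    (hindep : iIndepFun ε P)
    (hid : ∀ i, IdentDistrib (ε i) (ε 0) P P) (s M : ℕ) :
    Measure.map (fun ω (j : Fin M) => ε (s + 1 + (j : ℕ)) ω) P
      = Measure.pi (fun _ : Fin M => Measure.map (ε 0) P) := by
  have htuple : Measurable (fun ω (j : Fin M) => ε (s + 1 + (j : ℕ)) ω) :=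
    measurable_pi_lambda _ fun j => hmeas _
  have h0 : IsProbabilityMeasure (Measure.map (ε 0) P) :=
    Measure.isProbabilityMeasure_map (hmeas 0).aemeasurable
  refine (Measure.pi_eq (μ := fun _ : Fin M => Measure.map (ε 0) P) fun t ht => ?_).symm
  rw [Measure.map_apply htuple (MeasurableSet.univ_pi ht)]
  have hpre : (fun ω (j : Fin M) => ε (s + 1 + (j : ℕ)) ω) ⁻¹' (Set.pi Set.univ t)
      = ⋂ j : Fin M, ε (s + 1 + (j : ℕ)) ⁻¹' t j := by
    ext ω; simp [Set.mem_pi]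
  rw [hpre]
  -- rewrite as an intersection over a finset of ℕ
  classical
  set e : Fin M → ℕ := fun j => s + 1 + (j : ℕ) with he
  have hinj : Function.Injective e := by
    intro a b hab
    have : (a : ℕ) = (b : ℕ) := by simp only [he] at hab; omega
    exact Fin.ext this
  set sets : ℕ → Set ℝ := fun i => ⋂ (j : Fin M) (_ : e j = i), t j with hsets
  have hsets_e : ∀ j : Fin M, sets (e j) = t j := by
    intro j
    ext y
    simp only [hsets, Set.mem_iInter]
    constructor
    · intro h; exact h j rfl
    · intro hy j' hj'; rwa [hinj hj']
  have hsets_meas : ∀ i, MeasurableSet (sets i) := by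
    intro i
    exact MeasurableSet.iInter fun j => MeasurableSet.iInter fun _ => ht j
  have hS : (⋂ j : Fin M, ε (s + 1 + (j : ℕ)) ⁻¹' t j)
      = ⋂ i ∈ Finset.image e Finset.univ, ε i ⁻¹' sets i := by
    ext ω
    simp only [Set.mem_iInter, Finset.mem_image, Finset.mem_univ, true_and]
    constructor
    · rintro h i ⟨j, rfl⟩
      rw [hsets_e j]; exact h j
    · intro h j
      have := h (e j) ⟨j, rfl⟩
      rwa [hsets_e j] at this
  rw [hS, hindep.measure_inter_preimage_eq_mul _ (fun i _ => hsets_meas i)]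
  rw [Finset.prod_image (fun a _ b _ hab => hinj hab)]
  refine Finset.prod_congr rfl fun j _ => ?_
  rw [hsets_e j, Measure.map_apply (hmeas 0) (ht j)]
  exact (hid (e j)).measure_mem_eq (ht j)

lemma shift_preimage_prob_eq (hmeas : ∀ i, Measurable (ε i))
    (hindep : iIndepFun ε P)
    (hid : ∀ i, IdentDistrib (ε i) (ε 0) P P) (s M : ℕ)
    {U : Set (Fin M → ℝ)} (hU : MeasurableSet U) :
    P ((fun ω (j : Fin M) => ε (s + 1 + (j : ℕ)) ω) ⁻¹' U)
      = P ((fun ω (j : Fin M) => ε (0 + 1 + (j : ℕ)) ω) ⁻¹' U) := by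
  have h1 := map_shift_tuple_eq_pi P ε hmeas hindep hid s M
  have h2 := map_shift_tuple_eq_pi P ε hmeas hindep hid 0 M
  have e1 : Measurable (fun ω (j : Fin M) => ε (s + 1 + (j : ℕ)) ω) :=
    measurable_pi_lambda _ fun j => hmeas _
  have e2 : Measurable (fun ω (j : Fin M) => ε (0 + 1 + (j : ℕ)) ω) :=
    measurable_pi_lambda _ fun j => hmeas _
  rw [← Measure.map_apply e1 hU, ← Measure.map_apply e2 hU, h1, h2]

end Shift


section Hit2

lemma hset2 (Pr Qr : ℕ → Prop) :
    {t : ℕ∞ | ∃ m : ℕ, Pr m ∧ Qr m ∧ t = (m : ℕ∞)}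
      = {t : ℕ∞ | ∃ m : ℕ, (Pr m ∧ Qr m) ∧ t = (m : ℕ∞)} := by
  simp only [and_assoc]

lemma hit2_le_iff (Pr Qr : ℕ → Prop) (n : ℕ) :
    sInf {t : ℕ∞ | ∃ m : ℕ, Pr m ∧ Qr m ∧ t = (m : ℕ∞)} ≤ (n : ℕ∞)
      ↔ ∃ m ≤ n, Pr m ∧ Qr m := by
  rw [hset2]; exact hit_le_iff _ n

lemma hit2_lt_iff (Pr Qr : ℕ → Prop) (n : ℕ) :
    sInf {t : ℕ∞ | ∃ m : ℕ, Pr m ∧ Qr m ∧ t = (m : ℕ∞)} < (n : ℕ∞)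
      ↔ ∃ m < n, Pr m ∧ Qr m := by
  rw [hset2]; exact hit_lt_iff _ n

lemma hit2_eq_iff (Pr Qr : ℕ → Prop) (n : ℕ) :
    sInf {t : ℕ∞ | ∃ m : ℕ, Pr m ∧ Qr m ∧ t = (m : ℕ∞)} = (n : ℕ∞)
      ↔ (Pr n ∧ Qr n) ∧ ∀ m < n, ¬ (Pr m ∧ Qr m) := by
  rw [hset2]; exact hit_eq_iff _ n

end Hit2

section Meas

variable {Ω : Type*} [MeasurableSpace Ω] (ε : ℕ → Ω → ℝ)

/-- The σ-algebra generated by the increments with indices in `I`. -/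
noncomputable def mI (I : Set ℕ) : MeasurableSpace Ω :=
  ⨆ i ∈ I, MeasurableSpace.comap (ε i) inferInstance

lemma mI_le (hmeas : ∀ i, Measurable (ε i)) (I : Set ℕ) : mI ε I ≤ ‹MeasurableSpace Ω› :=
  iSup₂_le fun i _ => (hmeas i).comap_le

lemma mI_mono {I J : Set ℕ} (hIJ : I ⊆ J) : mI ε I ≤ mI ε J :=
  biSup_mono hIJ

lemma meas_eps {I : Set ℕ} {i : ℕ} (hi : i ∈ I) : Measurable[mI ε I] (ε i) :=
  Measurable.of_comap_le (le_iSup₂ (f := fun i _ => MeasurableSpace.comap (ε i)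
    inferInstance) i hi)

lemma meas_shift_sum {I : Set ℕ} (y : ℝ) (s m : ℕ)
    (h : ∀ j, 1 ≤ j → j ≤ m → s + j ∈ I) :
    Measurable[mI ε I] (fun ω => y + ∑ j ∈ Finset.Icc 1 m, ε (s + j) ω) := by
  refine Measurable.const_add ?_ y
  refine Finset.measurable_sum _ fun j hj => ?_
  rw [Finset.mem_Icc] at hj
  exact meas_eps ε (h j hj.1 hj.2)

lemma meas_walk {I : Set ℕ} (y : ℝ) (m : ℕ) (h : ∀ j, 1 ≤ j → j ≤ m → j ∈ I) :
    Measurable[mI ε I] (fun ω => y + rwS ε m ω) := by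
  refine Measurable.const_add ?_ y
  unfold rwS
  refine Finset.measurable_sum _ fun j hj => ?_
  rw [Finset.mem_Icc] at hj
  exact meas_eps ε (h j hj.1 hj.2)

/-- The event that the walk has not dropped to `≤ 0` by time `n`. -/
lemma setD_gt (y : ℝ) (n : ℕ) :
    {ω : Ω | (n : ℕ∞) < firstLE 0 (fun m => y + rwS ε m ω)}
      = ⋂ m, ⋂ (_ : 1 ≤ m ∧ m ≤ n), {ω : Ω | 0 < y + rwS ε m ω} := by
  ext ω
  simp only [Set.mem_setOf_eq, Set.mem_iInter]
  rw [← not_le]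
  unfold firstLE
  rw [hit2_le_iff]
  push_neg
  simp only [neg_zero]
  constructor
  · intro h m hm
    exact h m hm.2 hm.1
  · intro h m hmn h1
    exact h m ⟨h1, hmn⟩

lemma measD_gt (hmeas : ∀ i, Measurable (ε i)) (y : ℝ) (n : ℕ) :
    MeasurableSet[mI ε (Set.Icc 1 n)]
      {ω : Ω | (n : ℕ∞) < firstLE 0 (fun m => y + rwS ε m ω)} := by
  rw [setD_gt]
  refine MeasurableSet.iInter fun m => MeasurableSet.iInter fun hm => ?_
  exact measurableSet_lt measurable_const
    (meas_walk ε y m (fun j h1 h2 => Set.mem_Icc.2 ⟨h1, by omega⟩))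

lemma setT_eq (lo hi y : ℝ) (k n : ℕ) :
    {ω : Ω | bandTime lo hi (fun m => y + rwS ε m ω) (k + 1) = (n : ℕ∞)}
      = ⋃ j, ⋃ (_ : j < n),
          ({ω : Ω | bandTime lo hi (fun m => y + rwS ε m ω) k = (j : ℕ∞)}
            ∩ {ω : Ω | y + rwS ε n ω ∈ Set.Ico lo hi}
            ∩ ⋂ m, ⋂ (_ : j < m ∧ m < n), {ω : Ω | y + rwS ε m ω ∉ Set.Ico lo hi}) := by
  ext ω
  simp only [Set.mem_setOf_eq, Set.mem_iUnion, Set.mem_iInter, Set.mem_inter_iff]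
  show bandTime lo hi (fun m => y + rwS ε m ω) (k+1) = (n : ℕ∞) ↔ _
  rw [show bandTime lo hi (fun m => y + rwS ε m ω) (k+1)
      = sInf {t : ℕ∞ | ∃ m : ℕ, bandTime lo hi (fun m => y + rwS ε m ω) k < (m : ℕ∞)
          ∧ (y + rwS ε m ω) ∈ Set.Ico lo hi ∧ t = (m : ℕ∞)} from rfl]
  rw [hit2_eq_iff]
  constructor
  · rintro ⟨⟨hTn, hband⟩, hmin⟩
    have hne : bandTime lo hi (fun m => y + rwS ε m ω) k ≠ ⊤ := ne_top_of_lt hTn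
    obtain ⟨j, hj⟩ : ∃ j : ℕ, bandTime lo hi (fun m => y + rwS ε m ω) k = (j : ℕ∞) := by
      lift bandTime lo hi (fun m => y + rwS ε m ω) k to ℕ using hne with j
      exact ⟨j, rfl⟩
    have hjn : j < n := by rw [hj] at hTn; exact_mod_cast hTn
    refine ⟨j, hjn, ⟨hj, hband⟩, fun m hm => ?_⟩
    intro hmem
    exact hmin m hm.2 ⟨by rw [hj]; exact_mod_cast hm.1, hmem⟩
  · rintro ⟨j, hjn, ⟨⟨hj, hband⟩, hnot⟩⟩
    refine ⟨⟨by rw [hj]; exact_mod_cast hjn, hband⟩, fun m hm => ?_⟩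
    rintro ⟨hTm, hmem⟩
    rw [hj] at hTm
    have hjm : j < m := by exact_mod_cast hTm
    exact hnot m ⟨hjm, hm⟩ hmem

lemma measT (hmeas : ∀ i, Measurable (ε i)) (lo hi y : ℝ) :
    ∀ k n, MeasurableSet[mI ε (Set.Icc 1 n)]
      {ω : Ω | bandTime lo hi (fun m => y + rwS ε m ω) k = (n : ℕ∞)} := by
  intro k
  induction k with
  | zero =>
    intro n
    cases n with
    | zero =>
      have : {ω : Ω | bandTime lo hi (fun m => y + rwS ε m ω) 0 = ((0 : ℕ) : ℕ∞)}
          = Set.univ := by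
        ext ω; simp [bandTime]
      rw [this]; exact @MeasurableSet.univ Ω (mI ε _)
    | succ n =>
      have : {ω : Ω | bandTime lo hi (fun m => y + rwS ε m ω) 0 = ((n + 1 : ℕ) : ℕ∞)}
          = ∅ := by
        ext ω
        simp only [Set.mem_setOf_eq, Set.mem_empty_iff_false, iff_false]
        intro h
        have : ((0 : ℕ) : ℕ∞) = ((n + 1 : ℕ) : ℕ∞) := h
        exact absurd (Nat.cast_inj.mp this) (by omega)
      rw [this]; exact @MeasurableSet.empty Ω (mI ε _)
  | succ k ih =>
    intro n
    rw [setT_eq]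
    refine MeasurableSet.iUnion fun j => MeasurableSet.iUnion fun hj => ?_
    have h1 : MeasurableSet[mI ε (Set.Icc 1 n)]
        {ω : Ω | bandTime lo hi (fun m => y + rwS ε m ω) k = (j : ℕ∞)} :=
      mI_mono ε (Set.Icc_subset_Icc_right (by omega : j ≤ n)) _ (ih j)
    have h2 : MeasurableSet[mI ε (Set.Icc 1 n)]
        {ω : Ω | y + rwS ε n ω ∈ Set.Ico lo hi} :=
      (meas_walk ε y n fun j hj1 hj2 => Set.mem_Icc.2 ⟨hj1, hj2⟩) measurableSet_Ico
    have h3 : MeasurableSet[mI ε (Set.Icc 1 n)]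
        (⋂ m, ⋂ (_ : j < m ∧ m < n), {ω : Ω | y + rwS ε m ω ∉ Set.Ico lo hi}) := by
      refine MeasurableSet.iInter fun m => MeasurableSet.iInter fun hm => ?_
      exact ((meas_walk ε y m fun j' hj1 hj2 =>
        Set.mem_Icc.2 ⟨hj1, by omega⟩) measurableSet_Ico).compl
    exact (h1.inter h2).inter h3

end Meas
section Escape

variable {Ω : Type*} [MeasurableSpace Ω] (P : Measure Ω) [IsProbabilityMeasure P]
  (ε : ℕ → Ω → ℝ) (lo y0 : ℝ)

/-- The shifted walk started at `y0`, using increments `ε (s+1), ε (s+2), …`. -/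
noncomputable def gsf (s : ℕ) (ω : Ω) (m : ℕ) : ℝ :=
  y0 + ∑ j ∈ Finset.Icc 1 m, ε (s + j) ω

/-- The event that the shifted walk drops to `≤ 0` no later than it reaches `≥ lo`. -/
def Cset (s : ℕ) : Set Ω :=
  {ω | firstLE 0 (gsf ε y0 s ω) ≤ firstGE lo (gsf ε y0 s ω)}

/-- Approximating events: the shifted walk reaches `≥ lo` within `M` steps while staying `> 0`. -/
def DMset (s M : ℕ) : Set Ω :=
  ⋃ m, ⋃ (_ : 1 ≤ m ∧ m ≤ M),
    ({ω | lo ≤ gsf ε y0 s ω m} ∩ ⋂ j, ⋂ (_ : 1 ≤ j ∧ j ≤ m), {ω | 0 < gsf ε y0 s ω j})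

lemma mem_iUnion_DMset (s : ℕ) (ω : Ω) :
    ω ∈ (⋃ M, DMset ε lo y0 s M) ↔
      ∃ m, 1 ≤ m ∧ lo ≤ gsf ε y0 s ω m ∧ ∀ j, 1 ≤ j → j ≤ m → 0 < gsf ε y0 s ω j := by
  simp only [DMset, Set.mem_iUnion, Set.mem_inter_iff, Set.mem_iInter, Set.mem_setOf_eq]
  constructor
  · rintro ⟨M, m, ⟨h1, _⟩, hlo, hpos⟩
    exact ⟨m, h1, hlo, fun j hj1 hj2 => hpos j ⟨hj1, hj2⟩⟩
  · rintro ⟨m, h1, hlo, hpos⟩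
    exact ⟨m, m, ⟨h1, le_refl m⟩, hlo, fun j hj => hpos j hj.1 hj.2⟩

lemma Cset_eq_compl (s : ℕ) :
    Cset ε lo y0 s = (⋃ M, DMset ε lo y0 s M)ᶜ := by
  ext ω
  rw [Set.mem_compl_iff, mem_iUnion_DMset]
  show firstLE 0 (gsf ε y0 s ω) ≤ firstGE lo (gsf ε y0 s ω) ↔ _
  rw [← not_lt]
  constructor
  · intro h hc
    apply h
    obtain ⟨m, h1, hlo, hpos⟩ := hc
    have hu : firstGE lo (gsf ε y0 s ω) ≤ (m : ℕ∞) := sInf_le ⟨m, h1, hlo, rfl⟩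
    have hv : (m : ℕ∞) < firstLE 0 (gsf ε y0 s ω) := by
      rw [← not_le]
      unfold firstLE
      rw [hit2_le_iff]
      rintro ⟨j, hjm, hj1, hj2⟩
      rw [neg_zero] at hj2
      exact absurd hj2 (not_le.mpr (hpos j hj1 hjm))
    exact lt_of_le_of_lt hu hv
  · intro h hlt
    apply h
    have hne : firstGE lo (gsf ε y0 s ω) ≠ ⊤ := ne_top_of_lt hlt
    obtain ⟨n, hn⟩ := hit_ne_top_exists hne
    have hprop := (hit2_eq_iff (fun m => 1 ≤ m) (fun m => lo ≤ gsf ε y0 s ω m) n).1 hn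
    refine ⟨n, hprop.1.1, hprop.1.2, fun j hj1 hjn => ?_⟩
    have hv : (n : ℕ∞) < firstLE 0 (gsf ε y0 s ω) := by rw [← hn]; exact hlt
    rw [← not_le] at hv
    unfold firstLE at hv
    rw [hit2_le_iff] at hv
    by_contra hc
    push_neg at hc
    exact hv ⟨j, hjn, hj1, by rw [neg_zero]; linarith⟩

lemma meas_gsf {I : Set ℕ} (s m : ℕ) (h : ∀ j, 1 ≤ j → j ≤ m → s + j ∈ I) :
    Measurable[mI ε I] (fun ω => gsf ε y0 s ω m) :=
  meas_shift_sum ε y0 s m h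

lemma measDM (s M : ℕ) {I : Set ℕ} (hI : ∀ j, 1 ≤ j → j ≤ M → s + j ∈ I) :
    MeasurableSet[mI ε I] (DMset ε lo y0 s M) := by
  refine MeasurableSet.iUnion fun m => MeasurableSet.iUnion fun hm => ?_
  have h1 : MeasurableSet[mI ε I] {ω | lo ≤ gsf ε y0 s ω m} :=
    measurableSet_le measurable_const
      (meas_gsf ε y0 s m fun j hj1 hj2 => hI j hj1 (by omega))
  refine h1.inter (MeasurableSet.iInter fun j => MeasurableSet.iInter fun hj => ?_)
  exact measurableSet_lt measurable_const
    (meas_gsf ε y0 s j fun j' hj1 hj2 => hI j' hj1 (by omega))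

lemma measCset (s : ℕ) {I : Set ℕ} (hI : ∀ j, 1 ≤ j → s + j ∈ I) :
    MeasurableSet[mI ε I] (Cset ε lo y0 s) := by
  rw [Cset_eq_compl]
  exact (MeasurableSet.iUnion fun M =>
    measDM ε lo y0 s M fun j hj1 _ => hI j hj1).compl

/-- the `M`-step approximation event as a cylinder set. -/
noncomputable def sumU (M : ℕ) (v : Fin M → ℝ) (m : ℕ) : ℝ :=
  y0 + ∑ j ∈ Finset.range m, if h : j < M then v ⟨j, h⟩ else 0

lemma sumU_tuple (s M m : ℕ) (hm : m ≤ M) (ω : Ω) :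
    sumU y0 M (fun j : Fin M => ε (s + 1 + (j : ℕ)) ω) m = gsf ε y0 s ω m := by
  unfold sumU gsf
  congr 1
  rw [← Finset.Ico_add_one_right_eq_Icc, Finset.sum_Ico_eq_sum_range]
  simp only [Nat.add_sub_cancel]
  refine Finset.sum_congr rfl fun j hj => ?_
  rw [Finset.mem_range] at hj
  rw [dif_pos (by omega : j < M)]
  congr 1
  omega

lemma meas_sumU (M m : ℕ) : Measurable (fun v : Fin M → ℝ => sumU y0 M v m) := by
  unfold sumU
  refine Measurable.const_add ?_ y0
  refine Finset.measurable_sum _ fun j _ => ?_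
  by_cases h : j < M
  · simp only [dif_pos h]; exact measurable_pi_apply _
  · simp only [dif_neg h]; exact measurable_const

def UMset (M : ℕ) : Set (Fin M → ℝ) :=
  ⋃ m, ⋃ (_ : 1 ≤ m ∧ m ≤ M),
    ({v | lo ≤ sumU y0 M v m} ∩ ⋂ j, ⋂ (_ : 1 ≤ j ∧ j ≤ m), {v | 0 < sumU y0 M v j})

lemma meas_UMset (M : ℕ) : MeasurableSet (UMset lo y0 M) := by
  refine MeasurableSet.iUnion fun m => MeasurableSet.iUnion fun hm => ?_
  refine (measurableSet_le measurable_const (meas_sumU y0 M m)).inter ?_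
  exact MeasurableSet.iInter fun j => MeasurableSet.iInter fun hj =>
    measurableSet_lt measurable_const (meas_sumU y0 M j)

lemma DMset_eq_preimage (s M : ℕ) :
    DMset ε lo y0 s M
      = (fun ω (j : Fin M) => ε (s + 1 + (j : ℕ)) ω) ⁻¹' (UMset lo y0 M) := by
  ext ω
  simp only [DMset, UMset, Set.mem_preimage, Set.mem_iUnion, Set.mem_inter_iff,
    Set.mem_iInter, Set.mem_setOf_eq]
  constructor
  · rintro ⟨m, hm, hlo, hpos⟩
    refine ⟨m, hm, ?_, fun j hj => ?_⟩
    · rw [sumU_tuple ε y0 s M m hm.2]; exact hlo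
    · rw [sumU_tuple ε y0 s M j (by omega)]; exact hpos j hj
  · rintro ⟨m, hm, hlo, hpos⟩
    rw [sumU_tuple ε y0 s M m hm.2] at hlo
    refine ⟨m, hm, hlo, fun j hj => ?_⟩
    have := hpos j hj
    rwa [sumU_tuple ε y0 s M j (by omega)] at this

lemma prob_DMset_eq (hmeas : ∀ i, Measurable (ε i))
    (hindep : iIndepFun ε P)
    (hid : ∀ i, IdentDistrib (ε i) (ε 0) P P) (s M : ℕ) :
    P (DMset ε lo y0 s M) = P (DMset ε lo y0 0 M) := by
  rw [DMset_eq_preimage, DMset_eq_preimage]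
  exact shift_preimage_prob_eq P ε hmeas hindep hid s M (meas_UMset lo y0 M)

lemma measDM_amb (hmeas : ∀ i, Measurable (ε i)) (s M : ℕ) :
    MeasurableSet (DMset ε lo y0 s M) := by
  rw [DMset_eq_preimage]
  exact (measurable_pi_lambda _ fun j => hmeas _) (meas_UMset lo y0 M)

lemma prob_Cset_eq (hmeas : ∀ i, Measurable (ε i))
    (hindep : iIndepFun ε P)
    (hid : ∀ i, IdentDistrib (ε i) (ε 0) P P) (s : ℕ) :
    P (Cset ε lo y0 s) = P (Cset ε lo y0 0) := by
  rw [Cset_eq_compl, Cset_eq_compl]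
  have hmono : ∀ s', Monotone (fun M => DMset ε lo y0 s' M) := by
    intro s' M M' hMM'
    simp only [DMset]
    refine Set.iUnion_mono fun m => ?_
    refine Set.iUnion_subset fun hm => ?_
    exact Set.subset_iUnion_of_subset ⟨hm.1, le_trans hm.2 hMM'⟩ le_rfl
  have hU : ∀ s', P (⋃ M, DMset ε lo y0 s' M) = ⨆ M, P (DMset ε lo y0 s' M) := by
    intro s'
    exact Directed.measure_iUnion ((hmono s').directed_le)
  have hcompl : ∀ s', P ((⋃ M, DMset ε lo y0 s' M)ᶜ)
      = 1 - P (⋃ M, DMset ε lo y0 s' M) := by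
    intro s'
    rw [prob_compl_eq_one_sub (MeasurableSet.iUnion fun M => measDM_amb ε lo y0 hmeas s' M)]
  rw [hcompl, hcompl, hU, hU]
  congr 1
  congr 1
  exact funext fun M => prob_DMset_eq P ε lo y0 hmeas hindep hid s M
end Escape
section Main

variable {Ω : Type*} [MeasurableSpace Ω]

lemma rwS_add (ε : ℕ → Ω → ℝ) (n m : ℕ) (ω : Ω) :
    rwS ε (n + m) ω = rwS ε n ω + ∑ j ∈ Finset.Icc 1 m, ε (n + j) ω := by
  induction m with
  | zero => simp [rwS]
  | succ m ih =>
    have h1 : n + (m + 1) = (n + m) + 1 := by omega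
    rw [h1]
    unfold rwS
    rw [Finset.sum_Icc_succ_top (by omega : 1 ≤ n + m + 1)]
    unfold rwS at ih
    rw [ih, Finset.sum_Icc_succ_top (by omega : 1 ≤ m + 1)]
    have h2 : n + m + 1 = n + (m + 1) := by omega
    rw [h2]
    ring

lemma Cset_zero (ε : ℕ → Ω → ℝ) (lo y0 : ℝ) :
    Cset ε lo y0 0 = {ω | firstLE 0 (fun m => y0 + rwS ε m ω)
      ≤ firstGE lo (fun m => y0 + rwS ε m ω)} := by
  have hg : ∀ ω : Ω, gsf ε y0 0 ω = fun m => y0 + rwS ε m ω := by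
    intro ω; funext m
    unfold gsf rwS
    congr 1
    exact Finset.sum_congr rfl fun j _ => by rw [Nat.zero_add]
  unfold Cset
  ext ω
  rw [Set.mem_setOf_eq, Set.mem_setOf_eq, hg ω]

theorem main_aux (P : Measure Ω) [IsProbabilityMeasure P]
    (ε : ℕ → Ω → ℝ) (hmeas : ∀ i, Measurable (ε i))
    (hindep : iIndepFun ε P)
    (hid : ∀ i, IdentDistrib (ε i) (ε 0) P P)
    (lo hi' y0 x c : ℝ) (hcy : hi' - c ≤ y0) (hy0lo : y0 ≤ lo)
    (k : ℕ) (hk : 1 ≤ k) :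
    (P {ω | bandTime lo hi' (fun m => x + rwS ε m ω) k
        < firstLE 0 (fun m => x + rwS ε m ω)}).toReal
      ≤ (1 - (P {ω | ε 0 ω < -c}).toReal * (P (Cset ε lo y0 0)).toReal) ^ (k - 1) := by
  classical
  set p' : ℝ≥0∞ := P {ω | ε 0 ω < -c} with hp'
  set q' : ℝ≥0∞ := P (Cset ε lo y0 0) with hq'
  set c' : ℝ≥0∞ := p' * q' with hc'
  have hc'le1 : c' ≤ 1 := mul_le_one' prob_le_one prob_le_one
  set E : ℕ → Set Ω := fun k => {ω | bandTime lo hi' (fun m => x + rwS ε m ω) k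
      < firstLE 0 (fun m => x + rwS ε m ω)} with hE
  -- the one-step estimate
  have hstep : ∀ k, 1 ≤ k → P (E (k + 1)) ≤ (1 - c') * P (E k) := by
    intro k hk1
    obtain ⟨k0, rfl⟩ : ∃ k0, k = k0 + 1 := ⟨k - 1, by omega⟩
    set k := k0 + 1
    set T : ℕ → Ω → ℕ∞ := fun k ω => bandTime lo hi' (fun m => x + rwS ε m ω) k with hT
    set D : Ω → ℕ∞ := fun ω => firstLE 0 (fun m => x + rwS ε m ω) with hD
    set An : ℕ → Set Ω := fun n =>
      {ω | T k ω = (n : ℕ∞)} ∩ {ω | (n : ℕ∞) < D ω} with hAn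
    set Bn : ℕ → Set Ω := fun n => ε (n + 1) ⁻¹' Set.Iio (-c) with hBn
    set Cn : ℕ → Set Ω := fun n => Cset ε lo y0 (n + 1) with hCn
    -- measurability
    have hAn_m : ∀ n, MeasurableSet[mI ε (Set.Icc 1 n)] (An n) := fun n =>
      (measT ε hmeas lo hi' x k n).inter (measD_gt ε hmeas x n)
    have hAn_amb : ∀ n, MeasurableSet (An n) := fun n =>
      mI_le ε hmeas (Set.Icc 1 n) _ (hAn_m n)
    have hBn_amb : ∀ n, MeasurableSet (Bn n) := fun n =>
      (hmeas (n + 1)) measurableSet_Iio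
    have hCn_amb : ∀ n, MeasurableSet (Cn n) := fun n => by
      have h0 : Cn n = (⋃ M, DMset ε lo y0 (n + 1) M)ᶜ := Cset_eq_compl ε lo y0 (n + 1)
      rw [h0]
      exact (MeasurableSet.iUnion fun M => measDM_amb ε lo y0 hmeas (n + 1) M).compl
    -- the pathwise exclusion
    have hdisj : ∀ n, E (k + 1) ∩ (An n ∩ (Bn n ∩ Cn n)) = ∅ := by
      intro n
      rw [Set.eq_empty_iff_forall_notMem]
      rintro ω ⟨hE1, ⟨hTn, _hDgt⟩, hB, hC⟩
      rw [Set.mem_setOf_eq] at hTn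
      have hT1 : T (k + 1) ω < D ω := hE1
      have hB' : ε (n + 1) ω < -c := hB
      have hC' : firstLE 0 (gsf ε y0 (n + 1) ω) ≤ firstGE lo (gsf ε y0 (n + 1) ω) := hC
      -- the k-th visit is at a point of the band, below hi'
      have hTn' : (fun m => x + rwS ε m ω) n ∈ Set.Ico lo hi' := by
        have h0 : T k ω = sInf {t : ℕ∞ | ∃ m : ℕ, T k0 ω < (m : ℕ∞)
            ∧ (fun m => x + rwS ε m ω) m ∈ Set.Ico lo hi' ∧ t = (m : ℕ∞)} := rfl
        rw [h0] at hTn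
        exact ((hit2_eq_iff _ _ n).1 hTn).1.2
      have hfn : x + rwS ε n ω < hi' := hTn'.2
      -- after one more step the walk is strictly below y0
      have hsucc : rwS ε (n + 1) ω = rwS ε n ω + ε (n + 1) ω := by
        unfold rwS
        rw [Finset.sum_Icc_succ_top (by omega : 1 ≤ n + 1)]
      have hfn1 : x + rwS ε (n + 1) ω < y0 := by
        rw [hsucc]; linarith
      -- comparison with the shifted walk started at y0
      have hcmp : ∀ m, x + rwS ε (n + 1 + m) ω < gsf ε y0 (n + 1) ω m := by
        intro m
        rw [rwS_add ε (n + 1) m ω]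
        unfold gsf
        linarith
      -- the (k+1)-st visit time
      have hne : T (k + 1) ω ≠ ⊤ := ne_top_of_lt hT1
      obtain ⟨ms, hms⟩ : ∃ ms : ℕ, T (k + 1) ω = (ms : ℕ∞) := by
        lift T (k + 1) ω to ℕ using hne with j; exact ⟨j, rfl⟩
      have hprop : T k ω < (ms : ℕ∞) ∧ (fun m => x + rwS ε m ω) ms ∈ Set.Ico lo hi' := by
        have h0 : T (k + 1) ω = sInf {t : ℕ∞ | ∃ m : ℕ, T k ω < (m : ℕ∞)
            ∧ (fun m => x + rwS ε m ω) m ∈ Set.Ico lo hi' ∧ t = (m : ℕ∞)} := rfl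
        rw [h0] at hms
        exact ((hit2_eq_iff _ _ ms).1 hms).1
      have hnms : n < ms := by
        rw [hTn] at hprop
        exact_mod_cast hprop.1
      have hms_ne : ms ≠ n + 1 := by
        intro hcontr
        have : lo ≤ x + rwS ε ms ω := hprop.2.1
        rw [hcontr] at this
        linarith
      obtain ⟨r, hr1, hmsr⟩ : ∃ r, 1 ≤ r ∧ ms = n + 1 + r := ⟨ms - (n + 1), by omega, by omega⟩
      have hgr : lo ≤ gsf ε y0 (n + 1) ω r := by
        have h1 : lo ≤ x + rwS ε ms ω := hprop.2.1
        rw [hmsr] at h1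
        exact le_of_lt (lt_of_le_of_lt h1 (hcmp r))
      have hGE : firstGE lo (gsf ε y0 (n + 1) ω) ≤ (r : ℕ∞) :=
        sInf_le ⟨r, hr1, hgr, rfl⟩
      have hLE : firstLE 0 (gsf ε y0 (n + 1) ω) ≤ (r : ℕ∞) := le_trans hC' hGE
      obtain ⟨m', hm'r, hm'1, hm'le⟩ : ∃ m' ≤ r, 1 ≤ m' ∧ gsf ε y0 (n + 1) ω m' ≤ -0 := by
        unfold firstLE at hLE
        exact (hit2_le_iff _ _ r).1 hLE
      rw [neg_zero] at hm'le
      have hDle : D ω ≤ ((n + 1 + m' : ℕ) : ℕ∞) := by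
        refine sInf_le ⟨n + 1 + m', by omega, ?_, rfl⟩
        show x + rwS ε (n + 1 + m') ω ≤ -0
        rw [neg_zero]
        exact le_of_lt (lt_of_lt_of_le (hcmp m') hm'le)
      have hmsD : (ms : ℕ∞) < D ω := by rw [← hms]; exact hT1
      have : D ω ≤ (ms : ℕ∞) := by
        refine le_trans hDle ?_
        exact_mod_cast by omega
      exact absurd hmsD (not_lt.mpr this)
    -- covering E (k+1) by the fibers of T k
    have hcover : E (k + 1) ⊆ ⋃ n, E (k + 1) ∩ An n := by
      intro ω hω
      have hT1 : T (k + 1) ω < D ω := hω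
      have hne1 : T (k + 1) ω ≠ ⊤ := ne_top_of_lt hT1
      obtain ⟨ms, hms⟩ : ∃ ms : ℕ, T (k + 1) ω = (ms : ℕ∞) := by
        lift T (k + 1) ω to ℕ using hne1 with j; exact ⟨j, rfl⟩
      have hprop : T k ω < (ms : ℕ∞) := by
        have h0 : T (k + 1) ω = sInf {t : ℕ∞ | ∃ m : ℕ, T k ω < (m : ℕ∞)
            ∧ (fun m => x + rwS ε m ω) m ∈ Set.Ico lo hi' ∧ t = (m : ℕ∞)} := rfl
        rw [h0] at hms
        exact ((hit2_eq_iff _ _ ms).1 hms).1.1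
      have hneT : T k ω ≠ ⊤ := ne_top_of_lt hprop
      obtain ⟨n, hn⟩ : ∃ n : ℕ, T k ω = (n : ℕ∞) := by
        lift T k ω to ℕ using hneT with j; exact ⟨j, rfl⟩
      refine Set.mem_iUnion.2 ⟨n, hω, hn, ?_⟩
      show (n : ℕ∞) < D ω
      calc (n : ℕ∞) = T k ω := hn.symm
        _ < (ms : ℕ∞) := hprop
        _ < D ω := by rw [← hms]; exact hT1
    -- fibers of T k partition E k
    have hUnion : (⋃ n, An n) = E k := by
      ext ω
      simp only [Set.mem_iUnion, hAn, Set.mem_inter_iff, Set.mem_setOf_eq]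
      constructor
      · rintro ⟨n, hn, hlt⟩
        show T k ω < D ω
        rw [hn]; exact hlt
      · intro hω
        have hω' : T k ω < D ω := hω
        have hneT : T k ω ≠ ⊤ := ne_top_of_lt hω'
        obtain ⟨n, hn⟩ : ∃ n : ℕ, T k ω = (n : ℕ∞) := by
          lift T k ω to ℕ using hneT with j; exact ⟨j, rfl⟩
        exact ⟨n, hn, by rw [← hn]; exact hω'⟩
    have hdisjAn : Pairwise (Function.onFun Disjoint An) := by
      intro n n' hnn'
      rw [Function.onFun, Set.disjoint_left]
      rintro ω ⟨h1, _⟩ ⟨h2, _⟩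
      rw [Set.mem_setOf_eq] at h1 h2
      rw [h1] at h2
      exact hnn' (Nat.cast_inj.mp h2)
    -- independence
    have h_le : ∀ i, MeasurableSpace.comap (ε i) inferInstance ≤ ‹MeasurableSpace Ω› :=
      fun i => (hmeas i).comap_le
    have hprod : ∀ n, P (An n ∩ (Bn n ∩ Cn n)) = P (An n) * c' := by
      intro n
      have hdisj12 : Disjoint (Set.Icc 1 (n + 1)) (Set.Ici (n + 2)) := by
        rw [Set.disjoint_left]
        intro a ha ha'
        rw [Set.mem_Icc] at ha
        rw [Set.mem_Ici] at ha'
        omega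
      have hindep1 : Indep (mI ε (Set.Icc 1 (n + 1))) (mI ε (Set.Ici (n + 2))) P :=
        indep_iSup_of_disjoint h_le hindep hdisj12
      have hdisj2 : Disjoint (Set.Icc 1 n) ({n + 1} : Set ℕ) := by
        rw [Set.disjoint_left]
        intro a ha ha'
        rw [Set.mem_Icc] at ha
        rw [Set.mem_singleton_iff] at ha'
        omega
      have hindep2 : Indep (mI ε (Set.Icc 1 n)) (mI ε ({n + 1} : Set ℕ)) P :=
        indep_iSup_of_disjoint h_le hindep hdisj2
      have hB_mI : ∀ (I : Set ℕ), (n + 1) ∈ I → MeasurableSet[mI ε I] (Bn n) := by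
        intro I hI
        have h1 : MeasurableSpace.comap (ε (n + 1)) inferInstance ≤ mI ε I :=
          le_iSup₂ (f := fun i (_ : i ∈ I) => MeasurableSpace.comap (ε i) inferInstance)
            (n + 1) hI
        exact h1 _ ⟨Set.Iio (-c), measurableSet_Iio, rfl⟩
      have hAB_m : MeasurableSet[mI ε (Set.Icc 1 (n + 1))] (An n ∩ Bn n) := by
        refine MeasurableSet.inter ?_ ?_
        · exact mI_mono ε (Set.Icc_subset_Icc_right (by omega)) _ (hAn_m n)
        · exact hB_mI _ (Set.mem_Icc.2 ⟨by omega, le_rfl⟩)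
      have hC_m : MeasurableSet[mI ε (Set.Ici (n + 2))] (Cn n) :=
        measCset ε lo y0 (n + 1) (fun j hj => Set.mem_Ici.2 (by omega))
      have e1 : P ((An n ∩ Bn n) ∩ Cn n) = P (An n ∩ Bn n) * P (Cn n) :=
        (hindep1.indepSet_of_measurableSet hAB_m hC_m).measure_inter_eq_mul
      have hA_m2 : MeasurableSet[mI ε (Set.Icc 1 n)] (An n) := hAn_m n
      have e2 : P (An n ∩ Bn n) = P (An n) * P (Bn n) :=
        (hindep2.indepSet_of_measurableSet hA_m2 (hB_mI _ rfl)).measure_inter_eq_mul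
      have e3 : P (Bn n) = p' := by
        rw [hp']
        exact (hid (n + 1)).measure_mem_eq measurableSet_Iio
      have e4 : P (Cn n) = q' := by
        rw [hq', hCn]
        exact prob_Cset_eq P ε lo y0 hmeas hindep hid (n + 1)
      rw [← Set.inter_assoc, e1, e2, e3, e4, hc', mul_assoc]
    -- per-fiber estimate
    have hper : ∀ n, P (E (k + 1) ∩ An n) ≤ P (An n) * (1 - c') := by
      intro n
      have hsub : E (k + 1) ∩ An n ⊆ An n \ (An n ∩ (Bn n ∩ Cn n)) := by
        rintro ω ⟨hωE, hωA⟩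
        refine ⟨hωA, fun hmem => ?_⟩
        have : ω ∈ E (k + 1) ∩ (An n ∩ (Bn n ∩ Cn n)) := ⟨hωE, hmem⟩
        rw [hdisj n] at this
        exact this
      have hm2 : MeasurableSet (An n ∩ (Bn n ∩ Cn n)) :=
        (hAn_amb n).inter ((hBn_amb n).inter (hCn_amb n))
      calc P (E (k + 1) ∩ An n) ≤ P (An n \ (An n ∩ (Bn n ∩ Cn n))) := measure_mono hsub
        _ = P (An n) - P (An n ∩ (Bn n ∩ Cn n)) :=
          measure_diff Set.inter_subset_left hm2.nullMeasurableSet (measure_ne_top P _)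
        _ = P (An n) - P (An n) * c' := by rw [hprod n]
        _ = P (An n) * 1 - P (An n) * c' := by rw [mul_one]
        _ = P (An n) * (1 - c') := by
          rw [ENNReal.mul_sub (fun _ _ => measure_ne_top P _)]
    calc P (E (k + 1)) ≤ P (⋃ n, E (k + 1) ∩ An n) := measure_mono hcover
      _ ≤ ∑' n, P (E (k + 1) ∩ An n) := measure_iUnion_le _
      _ ≤ ∑' n, P (An n) * (1 - c') := ENNReal.tsum_le_tsum hper
      _ = (∑' n, P (An n)) * (1 - c') := ENNReal.tsum_mul_right
      _ = P (⋃ n, An n) * (1 - c') := by rw [measure_iUnion hdisjAn hAn_amb]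
      _ = P (E k) * (1 - c') := by rw [hUnion]
      _ = (1 - c') * P (E k) := mul_comm _ _
  -- conclusion by induction
  have hrq : (1 - c').toReal = 1 - p'.toReal * q'.toReal := by
    rw [ENNReal.toReal_sub_of_le hc'le1 ENNReal.one_ne_top, ENNReal.toReal_one,
      hc', ENNReal.toReal_mul]
  have hrq_nonneg : 0 ≤ 1 - p'.toReal * q'.toReal := by
    rw [← hrq]; exact ENNReal.toReal_nonneg
  show (P (E k)).toReal ≤ (1 - p'.toReal * q'.toReal) ^ (k - 1)
  induction k, hk using Nat.le_induction with
  | base =>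
    simp only [Nat.sub_self, pow_zero]
    calc (P (E 1)).toReal ≤ (1 : ℝ≥0∞).toReal :=
        ENNReal.toReal_mono ENNReal.one_ne_top prob_le_one
      _ = 1 := ENNReal.toReal_one
  | succ n hn ih =>
    have h1 : (P (E (n + 1))).toReal ≤ ((1 - c') * P (E n)).toReal := by
      refine ENNReal.toReal_mono ?_ (hstep n hn)
      exact ENNReal.mul_ne_top (by simp [ENNReal.sub_ne_top]) (measure_ne_top P _)
    rw [ENNReal.toReal_mul, hrq] at h1
    calc (P (E (n + 1))).toReal
        ≤ (1 - p'.toReal * q'.toReal) * (P (E n)).toReal := h1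
      _ ≤ (1 - p'.toReal * q'.toReal) * (1 - p'.toReal * q'.toReal) ^ (n - 1) :=
          mul_le_mul_of_nonneg_left ih hrq_nonneg
      _ = (1 - p'.toReal * q'.toReal) ^ (n - 1 + 1) := (pow_succ' _ _).symm
      _ = (1 - p'.toReal * q'.toReal) ^ (n + 1 - 1) := by
          congr 1
          omega

end Main


/-- For the centered bounded random walk started at `x ≥ 0`, with `a = A/4`, the probability
that the walk visits the band `[(i-1)a, ia)` at least `k` times before first going `≤ 0` is at
most `(1 - Q[ε₀ < -A/2] ⬝ Q_{(i-1)a - A/4}[V⁺_{(i-1)a} ≥ V⁻_0])^{k-1}`. -/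
theorem band_visits_geometric_bound
    {Ω : Type*} [MeasurableSpace Ω] (P : Measure Ω) [IsProbabilityMeasure P]
    (ε : ℕ → Ω → ℝ) (hmeas : ∀ i, Measurable (ε i))
    (hindep : iIndepFun ε P)
    (hid : ∀ i, IdentDistrib (ε i) (ε 0) P P)
    (hcent : ∫ ω, ε 0 ω ∂P = 0) (hvarpos : 0 < ProbabilityTheory.variance (ε 0) P)
    (η₀ A a : ℝ) (hη₀ : 0 < η₀) (hη₀' : η₀ < 1 / 2)
    (hA : A = Real.log ((1 - η₀) / η₀)) (hbdd : ∀ i, ∀ᵐ ω ∂P, |ε i ω| ≤ A)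
    (ha : a = A / 4)
    (i : ℕ) (hi : 0 < ((i : ℝ) - 1) * a) (x : ℝ) (hx : 0 ≤ x) (k : ℕ) (hk : 1 ≤ k) :
    (P {ω | bandTime (((i : ℝ) - 1) * a) ((i : ℝ) * a) (fun m => x + rwS ε m ω) k
        < firstLE 0 (fun m => x + rwS ε m ω)}).toReal
      ≤ (1 - (P {ω | ε 0 ω < -(A / 2)}).toReal *
          (P {ω | firstLE 0 (fun m => (((i : ℝ) - 1) * a - A / 4) + rwS ε m ω)
              ≤ firstGE (((i : ℝ) - 1) * a)
                  (fun m => (((i : ℝ) - 1) * a - A / 4) + rwS ε m ω)}).toReal) ^ (k - 1) := by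
  have hA0 : 0 < A := by
    rw [hA]
    exact Real.log_pos ((one_lt_div hη₀).2 (by linarith))
  have hcy : (i : ℝ) * a - A / 2 ≤ ((i : ℝ) - 1) * a - A / 4 :=
    le_of_eq (by rw [ha]; ring)
  have hy0lo : ((i : ℝ) - 1) * a - A / 4 ≤ ((i : ℝ) - 1) * a := by linarith
  have h := main_aux P ε hmeas hindep hid (((i : ℝ) - 1) * a) ((i : ℝ) * a)
    (((i : ℝ) - 1) * a - A / 4) x (A / 2) hcy hy0lo k hk
  rwa [Cset_zero] at h
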